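/- arXiv:1906.11613 — 2 statements merged into one kernel-verified Lean document; each statement's English description precedes it below -/
import Mathlib

section
/- (Mind2Mind convergence theorem) Let χ be a compact metric space (data space), M a compact metric space (latent feature space), Z a metric space (prior latent space). Let c₁ : χ → M (encoder), g₁ : M → χ (decoder), both locally Lipschitz, and let AE = g₁ ∘ c₁. Let P_D and P_D' be Borel probability measures on χ (source and target data distributions), and let P⁰_θ be a compactly supported Borel probability measure on M (the MindGAN generated distribution). Define P'_θ = g₁#P⁰_θ. Then there exist constants a, b ≥ 0 such that W(P_D', P'_θ) ≤ a·W(P_D, P_D') + W(P_D, AE#P_D) + b·W(c₁#P_D', P⁰_θ). -/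
/-!
The 1-Wasserstein distance satisfies the triangle inequality: two couplings sharing a marginal
are glued by disintegrating the second one along that marginal. Pushing a coupling forward along
a `K`-Lipschitz map shows `W(f#μ, f#ν) ≤ K W(μ, ν)`. Following the chain
`P_D' → P_D → AE#P_D → g₁#c₁#P_D' → g₁#P⁰_θ` gives the bound with `a = 1 + Lip(g₁) Lip(c₁)` and
`b = Lip(g₁)`, the Lipschitz constants existing because locally Lipschitz maps on compact spaces
are Lipschitz.
-/

open MeasureTheory ENNReal NNReal ProbabilityTheory

/-- The 1-Wasserstein distance, as the infimum over transference plans of the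
expected (extended) distance. -/
noncomputable def wassersteinDist {X : Type*} [MeasurableSpace X] [PseudoEMetricSpace X]
    (μ ν : Measure X) : ℝ≥0∞ :=
  ⨅ γ ∈ {γ : Measure (X × X) | γ.map Prod.fst = μ ∧ γ.map Prod.snd = ν},
    ∫⁻ p, edist p.1 p.2 ∂γ

lemma LocallyLipschitz.exists_lipschitzWith {X Y : Type*} [PseudoMetricSpace X] [CompactSpace X]
    [PseudoMetricSpace Y] {f : X → Y} (hf : LocallyLipschitz f) : ∃ K, LipschitzWith K f := by
  simpa using (locallyLipschitzOn_univ.2 hf).exists_lipschitzOnWith_of_compact isCompact_univ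

lemma MeasureTheory.Measure.prodMkLeft_comp {X Y Z : Type*} [MeasurableSpace X]
    [MeasurableSpace Y] [MeasurableSpace Z] (γ : Measure (Y × X)) (κ : Kernel X Z) :
    Kernel.prodMkLeft Y κ ∘ₘ γ = κ ∘ₘ γ.snd := by
  rw [Measure.snd, ← Measure.deterministic_comp_eq_map measurable_snd, Measure.comp_assoc,
    Kernel.comp_deterministic_eq_comap]
  rfl

section Wasserstein

variable {X : Type*} [MeasurableSpace X] [PseudoEMetricSpace X]

lemma wassersteinDist_le_lintegral {μ ν : Measure X} {γ : Measure (X × X)}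
    (h₁ : γ.map Prod.fst = μ) (h₂ : γ.map Prod.snd = ν) :
    wassersteinDist μ ν ≤ ∫⁻ p, edist p.1 p.2 ∂γ :=
  iInf₂_le γ ⟨h₁, h₂⟩

variable [OpensMeasurableSpace X] [SecondCountableTopology X]

lemma wassersteinDist_comm (μ ν : Measure X) : wassersteinDist μ ν = wassersteinDist ν μ := by
  suffices h : ∀ μ ν : Measure X, wassersteinDist μ ν ≤ wassersteinDist ν μ from
    le_antisymm (h μ ν) (h ν μ)
  refine fun μ ν ↦ le_iInf₂ fun γ ⟨h₁, h₂⟩ ↦ ?_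
  calc wassersteinDist μ ν ≤ ∫⁻ p, edist p.1 p.2 ∂γ.map Prod.swap :=
        wassersteinDist_le_lintegral (by rwa [Measure.map_map measurable_fst measurable_swap])
          (by rwa [Measure.map_map measurable_snd measurable_swap])
    _ = ∫⁻ p, edist p.1 p.2 ∂γ := by
        simp_rw [lintegral_map measurable_edist measurable_swap, Prod.fst_swap, Prod.snd_swap,
          edist_comm]

lemma wassersteinDist_map_le {Y : Type*} [MeasurableSpace Y] [PseudoEMetricSpace Y]
    [BorelSpace Y] [SecondCountableTopology Y] {K : ℝ≥0} {f : X → Y} (hf : LipschitzWith K f)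
    (μ ν : Measure X) [IsProbabilityMeasure μ] [IsProbabilityMeasure ν] :
    wassersteinDist (μ.map f) (ν.map f) ≤ K * wassersteinDist μ ν := by
  have hfm : Measurable f := hf.continuous.measurable
  have : Nonempty ({γ | γ.map Prod.fst = μ ∧ γ.map Prod.snd = ν} : Set (Measure (X × X))) :=
    ⟨μ.prod ν, Measure.fst_prod, Measure.snd_prod⟩
  conv_rhs => rw [wassersteinDist, iInf_subtype']
  rw [ENNReal.mul_iInf fun h ↦ absurd h coe_ne_top]
  refine le_iInf fun ⟨γ, h₁, h₂⟩ ↦ ?_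
  calc wassersteinDist (μ.map f) (ν.map f) ≤ ∫⁻ p, edist p.1 p.2 ∂γ.map (Prod.map f f) :=
        wassersteinDist_le_lintegral
          (by rw [Measure.map_map measurable_fst (hfm.prodMap hfm), ← h₁,
            Measure.map_map hfm measurable_fst]; rfl)
          (by rw [Measure.map_map measurable_snd (hfm.prodMap hfm), ← h₂,
            Measure.map_map hfm measurable_snd]; rfl)
    _ = ∫⁻ p, edist (f p.1) (f p.2) ∂γ := lintegral_map measurable_edist (hfm.prodMap hfm)
    _ ≤ ∫⁻ p, K * edist p.1 p.2 ∂γ := lintegral_mono fun p ↦ hf p.1 p.2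
    _ = K * ∫⁻ p, edist p.1 p.2 ∂γ := lintegral_const_mul _ measurable_edist

lemma exists_coupling_lintegral_edist_le_add [StandardBorelSpace X]
    {μ ρ ν : Measure X} [IsProbabilityMeasure ρ] {γ₁ γ₂ : Measure (X × X)}
    (h₁₁ : γ₁.map Prod.fst = μ) (h₁₂ : γ₁.map Prod.snd = ρ)
    (h₂₁ : γ₂.map Prod.fst = ρ) (h₂₂ : γ₂.map Prod.snd = ν) :
    ∃ γ : Measure (X × X), γ.map Prod.fst = μ ∧ γ.map Prod.snd = ν ∧
      ∫⁻ p, edist p.1 p.2 ∂γ ≤ ∫⁻ p, edist p.1 p.2 ∂γ₁ + ∫⁻ p, edist p.1 p.2 ∂γ₂ := by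
  have := nonempty_of_isProbabilityMeasure ρ
  have : IsProbabilityMeasure γ₁ :=
    (Measure.isProbabilityMeasure_map_iff measurable_snd.aemeasurable).1 (h₁₂ ▸ ‹_›)
  have : IsProbabilityMeasure γ₂ :=
    (Measure.isProbabilityMeasure_map_iff measurable_fst.aemeasurable).1 (h₂₁ ▸ ‹_›)
  obtain ⟨κ, _, hγ₂⟩ : ∃ κ : Kernel X X, IsMarkovKernel κ ∧ ρ ⊗ₘ κ = γ₂ :=
    ⟨γ₂.condKernel, inferInstance, h₂₁ ▸ γ₂.disintegrate γ₂.condKernel⟩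
  -- the law of `(x, y, z)` where `(x, y) ∼ γ₁` and `z ∼ κ y`
  set π := γ₁ ⊗ₘ Kernel.prodMkLeft X κ
  have hπ₁ : π.map Prod.fst = γ₁ := Measure.fst_compProd _ _
  have hπ₂ : π.map Prod.snd = ν := by
    rw [← Measure.snd, Measure.snd_compProd, Measure.prodMkLeft_comp, Measure.snd, h₁₂,
      ← Measure.snd_compProd, hγ₂, Measure.snd, h₂₂]
  refine ⟨π.map fun p ↦ (p.1.1, p.2), ?_, ?_, ?_⟩
  · rw [Measure.map_map measurable_fst (by fun_prop),
      show (Prod.fst ∘ fun p : (X × X) × X ↦ (p.1.1, p.2)) = Prod.fst ∘ Prod.fst from rfl,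
      ← Measure.map_map measurable_fst measurable_fst, hπ₁, h₁₁]
  · rwa [Measure.map_map measurable_snd (by fun_prop)]
  · have hfst : ∫⁻ p, edist p.1.1 p.1.2 ∂π = ∫⁻ p, edist p.1 p.2 ∂γ₁ := by
      rw [← hπ₁, lintegral_map measurable_edist measurable_fst]
    have hsnd : ∫⁻ p, edist p.1.2 p.2 ∂π = ∫⁻ p, edist p.1 p.2 ∂γ₂ := by
      rw [Measure.lintegral_compProd (by fun_prop), ← hγ₂, Measure.lintegral_compProd (by fun_prop),
        ← h₁₂, lintegral_map (by fun_prop) measurable_snd]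
      rfl
    calc ∫⁻ p, edist p.1 p.2 ∂(π.map fun p ↦ (p.1.1, p.2))
        = ∫⁻ p, edist p.1.1 p.2 ∂π := lintegral_map measurable_edist (by fun_prop)
      _ ≤ ∫⁻ p, edist p.1.1 p.1.2 + edist p.1.2 p.2 ∂π :=
          lintegral_mono fun p ↦ edist_triangle _ _ _
      _ = ∫⁻ p, edist p.1 p.2 ∂γ₁ + ∫⁻ p, edist p.1 p.2 ∂γ₂ := by
          rw [lintegral_add_left (by fun_prop), hfst, hsnd]

lemma wassersteinDist_triangle [StandardBorelSpace X] (μ ρ ν : Measure X) [IsProbabilityMeasure ρ] :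
    wassersteinDist μ ν ≤ wassersteinDist μ ρ + wassersteinDist ρ ν :=
  ENNReal.le_iInf₂_add_iInf₂ fun _ ⟨h₁₁, h₁₂⟩ _ ⟨h₂₁, h₂₂⟩ ↦
    let ⟨_, h₁, h₂, hγ⟩ := exists_coupling_lintegral_edist_le_add h₁₁ h₁₂ h₂₁ h₂₂
    (wassersteinDist_le_lintegral h₁ h₂).trans hγ

end Wasserstein

theorem mind2mind_convergence_general
    {χ M : Type*} [MetricSpace χ] [MeasurableSpace χ] [BorelSpace χ] [CompactSpace χ]
    [MetricSpace M] [MeasurableSpace M] [BorelSpace M] [CompactSpace M]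
    (c₁ : χ → M) (g₁ : M → χ) (hc₁ : LocallyLipschitz c₁) (hg₁ : LocallyLipschitz g₁)
    (PD PD' : Measure χ) [IsProbabilityMeasure PD] [IsProbabilityMeasure PD']
    (Pθ0 : Measure M) [IsProbabilityMeasure Pθ0] :
    ∃ a b : ℝ≥0,
      wassersteinDist PD' (Pθ0.map g₁)
        ≤ a * wassersteinDist PD PD'
          + wassersteinDist PD (PD.map (g₁ ∘ c₁))
          + b * wassersteinDist (PD'.map c₁) Pθ0 := by
  obtain ⟨Kc, hc⟩ := hc₁.exists_lipschitzWith
  obtain ⟨Kg, hg⟩ := hg₁.exists_lipschitzWith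
  have hcm : Measurable c₁ := hc.continuous.measurable
  have hgm : Measurable g₁ := hg.continuous.measurable
  have hAE : LipschitzWith (Kg * Kc) (g₁ ∘ c₁) := hg.comp hc
  have : IsProbabilityMeasure (PD'.map c₁) := Measure.isProbabilityMeasure_map (by fun_prop)
  have : IsProbabilityMeasure (PD.map (g₁ ∘ c₁)) := Measure.isProbabilityMeasure_map (by fun_prop)
  have : IsProbabilityMeasure ((PD'.map c₁).map g₁) :=
    Measure.isProbabilityMeasure_map (by fun_prop)
  refine ⟨1 + Kg * Kc, Kg, ?_⟩
  calc wassersteinDist PD' (Pθ0.map g₁)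
      ≤ wassersteinDist PD' PD + (wassersteinDist PD (PD.map (g₁ ∘ c₁))
          + (wassersteinDist (PD.map (g₁ ∘ c₁)) ((PD'.map c₁).map g₁)
            + wassersteinDist ((PD'.map c₁).map g₁) (Pθ0.map g₁))) := by
        grw [← wassersteinDist_triangle _ ((PD'.map c₁).map g₁),
          ← wassersteinDist_triangle _ (PD.map (g₁ ∘ c₁)), ← wassersteinDist_triangle _ PD]
    _ ≤ wassersteinDist PD PD' + (wassersteinDist PD (PD.map (g₁ ∘ c₁))
          + ((Kg * Kc : ℝ≥0) * wassersteinDist PD PD'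
            + Kg * wassersteinDist (PD'.map c₁) Pθ0)) := by
        rw [wassersteinDist_comm PD']
        gcongr
        · rw [Measure.map_map hgm hcm]
          exact wassersteinDist_map_le hAE PD PD'
        · exact wassersteinDist_map_le hg _ Pθ0
    _ = ((1 + Kg * Kc : ℝ≥0) : ℝ≥0∞) * wassersteinDist PD PD'
          + wassersteinDist PD (PD.map (g₁ ∘ c₁)) + Kg * wassersteinDist (PD'.map c₁) Pθ0 := by
        push_cast
        ring

/-- Mind2Mind convergence theorem. The Wasserstein error of the
transferred GAN is bounded by the domain shift, the autoencoder error and the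
MindGAN error. -/
theorem mind2mind_convergence
    {χ M Z : Type*} [MetricSpace χ] [MeasurableSpace χ] [BorelSpace χ] [CompactSpace χ]
    [MetricSpace M] [MeasurableSpace M] [BorelSpace M] [CompactSpace M]
    [MetricSpace Z]
    (c₁ : χ → M) (g₁ : M → χ) (hc₁ : LocallyLipschitz c₁) (hg₁ : LocallyLipschitz g₁)
    (PD PD' : Measure χ) [IsProbabilityMeasure PD] [IsProbabilityMeasure PD']
    (Pθ0 : Measure M) [IsProbabilityMeasure Pθ0]
    (hsupp : ∃ K : Set M, IsCompact K ∧ Pθ0 Kᶜ = 0) :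
    ∃ a b : ℝ≥0,
      wassersteinDist PD' (Pθ0.map g₁)
        ≤ a * wassersteinDist PD PD'
          + wassersteinDist PD (PD.map (g₁ ∘ c₁))
          + b * wassersteinDist (PD'.map c₁) Pθ0 :=
  mind2mind_convergence_general c₁ g₁ hc₁ hg₁ PD PD' Pθ0
end

section
/- (Kantorovich–Rubinstein special case used in WGAN) Let X be a compact metric space and μ, ν Borel probability measures on X. Then W(μ, ν) = sup over 1-Lipschitz functions f : X → ℝ of (∫ f dμ − ∫ f dν). -/
/-!
Discretize: cover the compact space by finitely many measurable cells, each within `ε` of a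
centre `zᵢ`, and let `aᵢ = μ(cellᵢ)`, `bⱼ = ν(cellⱼ)`. A cost-minimizing discrete plan `π`
between `a` and `b` exists by compactness, and its support is cyclically monotone, since moving
mass around a cycle of the support cannot lower the cost. Rockafellar's construction turns this
into a 1-Lipschitz `f` with `f zᵢ - f zⱼ = dist zᵢ zⱼ` wherever `πᵢⱼ > 0`, so the discrete cost is
`∑ aᵢ f zᵢ - ∑ bⱼ f zⱼ`. Spreading `π` inside the cells gives a coupling of `μ` and `ν` whose
cost exceeds the discrete one by at most `2ε`, while replacing `a`, `b` by `μ`, `ν` changes the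
`f`-sums by at most `ε` each. The reverse inequality is `f x - f y ≤ dist x y` integrated
against any coupling.
-/

open MeasureTheory ENNReal NNReal

section CyclicalMonotonicity

variable {α β ι κ : Type*}

/-- For `l = [(a₁, b₁), …, (aₘ, bₘ)]`, `chainCost c a₀ l = ∑ₖ (c aₖ₋₁ bₖ - c aₖ bₖ)`: the change
of cost when each `bₖ` is served from `aₖ₋₁` instead of `aₖ`. -/
def chainCost (c : α → β → ℝ) (a : α) : List (α × β) → ℝ
  | [] => 0
  | p :: l => c a p.2 - c p.1 p.2 + chainCost c p.1 l

@[simp] lemma chainCost_nil (c : α → β → ℝ) (a : α) : chainCost c a [] = 0 := rfl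

@[simp] lemma chainCost_cons (c : α → β → ℝ) (a : α) (p : α × β) (l : List (α × β)) :
    chainCost c a (p :: l) = c a p.2 - c p.1 p.2 + chainCost c p.1 l := rfl

lemma chainCost_map (c : α → β → ℝ) (f : ι → α) (g : κ → β) (i : ι) (l : List (ι × κ)) :
    chainCost c (f i) (l.map (Prod.map f g)) = chainCost (fun i j => c (f i) (g j)) i l := by
  induction l generalizing i with
  | nil => rfl
  | cons p l ih => simp [ih]

lemma chainCost_sum {γ : Type*} (s : Finset γ) (c : γ → α → β → ℝ) (a : α) (l : List (α × β)) :
    chainCost (fun a b => ∑ k ∈ s, c k a b) a l = ∑ k ∈ s, chainCost (c k) a l := by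
  induction l generalizing a with
  | nil => simp
  | cons p l ih => simp [ih, Finset.sum_add_distrib, Finset.sum_sub_distrib]

lemma chainCost_mul_const (c : α → β → ℝ) (r : ℝ) (a : α) (l : List (α × β)) :
    chainCost (fun a b => c a b * r) a l = chainCost c a l * r := by
  induction l generalizing a with
  | nil => simp
  | cons p l ih => simp [ih]; ring

lemma chainCost_of_left (g : α → ℝ) (a : α) (l : List (α × β)) (p : α × β) :
    chainCost (fun a _ => g a) a (l ++ [p]) = g a - g p.1 := by
  induction l generalizing a with
  | nil => simp
  | cons q l ih => simp [ih]

lemma chainCost_of_right (g : β → ℝ) (a : α) (l : List (α × β)) :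
    chainCost (fun _ b => g b) a l = 0 := by
  induction l generalizing a with
  | nil => rfl
  | cons q l ih => simp [ih]

lemma chainCost_nonneg {c : α → β → ℝ} (hc : ∀ a b, 0 ≤ c a b) {l : List (α × β)}
    (hl : ∀ q ∈ l, c q.1 q.2 = 0) (a : α) : 0 ≤ chainCost c a l := by
  induction l generalizing a with
  | nil => rfl
  | cons q l ih =>
    simp only [List.mem_cons, forall_eq_or_imp] at hl
    simpa [hl.1] using add_nonneg (hc a q.2) (ih hl.2 q.1)

/-- The chain `l ++ [p]` started at `p.1` is closed, so this is the usual
`∑ₖ c aₖ bₖ ≤ ∑ₖ c aₖ₋₁ bₖ` for cycles in `S`. -/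
def IsCyclicallyMonotone (c : α → β → ℝ) (S : Set (α × β)) : Prop :=
  ∀ p ∈ S, ∀ l : List (α × β), (∀ q ∈ l, q ∈ S) → 0 ≤ chainCost c p.1 (l ++ [p])

lemma IsCyclicallyMonotone.image {c : α → β → ℝ} {f : ι → α} {g : κ → β} {S : Set (ι × κ)}
    (hS : IsCyclicallyMonotone (fun i j => c (f i) (g j)) S) :
    IsCyclicallyMonotone c (Prod.map f g '' S) := by
  rintro _ ⟨p, hp, rfl⟩ l hl
  obtain ⟨l, rfl⟩ : l ∈ Set.range (List.map fun q : S => Prod.map f g q.1) := by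
    rw [Set.range_list_map]
    intro x hx
    obtain ⟨q, hq, rfl⟩ := hl x hx
    exact ⟨⟨q, hq⟩, rfl⟩
  have := hS p hp (l.map Subtype.val) (by simp only [List.mem_map]; rintro _ ⟨q, -, rfl⟩; exact q.2)
  rwa [← chainCost_map, List.map_append, List.map_map] at this

/-- Rockafellar's construction: `f x` is the infimum over chains in `S` from a base point `p₀`
of the cost of the chain closed up at `x`. -/
theorem IsCyclicallyMonotone.exists_lipschitzWith {X : Type*} [PseudoMetricSpace X]
    {S : Set (X × X)} (hS : IsCyclicallyMonotone dist S) :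
    ∃ f : X → ℝ, LipschitzWith 1 f ∧ ∀ p ∈ S, f p.2 + dist p.1 p.2 ≤ f p.1 := by
  rcases S.eq_empty_or_nonempty with rfl | ⟨p₀, hp₀⟩
  · exact ⟨0, LipschitzWith.const' 0, by simp⟩
  let L := {l : List (X × X) // ∀ q ∈ l, q ∈ S}
  let g : L → X → ℝ := fun l x => chainCost dist x (l.1 ++ [p₀])
  have g_le (l : L) (x y : X) : g l x ≤ g l y + dist x y := by
    obtain ⟨q, l', hl'⟩ := List.exists_cons_of_ne_nil (List.concat_ne_nil p₀ l.1)
    simp only [g, hl', chainCost_cons]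
    linarith [dist_triangle x y q.2]
  have bdd (x : X) : BddBelow (Set.range fun l => g l x) :=
    ⟨-dist p₀.1 x, by
      rintro _ ⟨l, rfl⟩
      linarith [g_le l p₀.1 x, hS p₀ hp₀ l.1 l.2]⟩
  have : Nonempty L := ⟨⟨[], by simp⟩⟩
  refine ⟨fun x => ⨅ l, g l x, LipschitzWith.of_le_add fun x y => ?_, fun p hp => ?_⟩
  · have (l : L) : (⨅ l, g l x) - dist x y ≤ g l y := by
      linarith [ciInf_le (bdd x) l, g_le l x y]
    linarith [le_ciInf this]
  · have (l : L) : (⨅ l, g l p.2) + dist p.1 p.2 ≤ g l p.1 := by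
      have := ciInf_le (bdd p.2) ⟨p :: l.1, by simpa [hp] using l.2⟩
      simp only [g, List.cons_append, chainCost_cons, dist_self] at this
      linarith
    exact le_ciInf this

end CyclicalMonotonicity

section ChainMatrix

variable {ι κ : Type*} [DecidableEq ι] [DecidableEq κ]

/-- Entry `(i, j)` counts how often the chain serves `j` from `i` in `chainCost`, with sign. -/
def chainMatrix (a : ι) (l : List (ι × κ)) : ι → κ → ℝ :=
  fun i j => chainCost (fun i' j' => if i' = i ∧ j' = j then 1 else 0) a l

lemma sum_chainMatrix_row [Fintype κ] (l : List (ι × κ)) (p : ι × κ) (i : ι) :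
    ∑ j, chainMatrix p.1 (l ++ [p]) i j = 0 := by
  have : ∑ j, chainMatrix p.1 (l ++ [p]) i j
      = chainCost (fun i' _ => if i' = i then 1 else 0) p.1 (l ++ [p]) := by
    simp only [chainMatrix, ← chainCost_sum]
    congr; ext i' j'
    simp [ite_and]
  rw [this, chainCost_of_left, sub_self]

lemma sum_chainMatrix_col [Fintype ι] (a : ι) (l : List (ι × κ)) (j : κ) :
    ∑ i, chainMatrix a l i j = 0 := by
  have : ∑ i, chainMatrix a l i j = chainCost (fun _ j' => if j' = j then 1 else 0) a l := by
    simp only [chainMatrix, ← chainCost_sum]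
    congr; ext i' j'
    simp [ite_and]
  rw [this, chainCost_of_right]

lemma chainMatrix_nonneg {a : ι} {l : List (ι × κ)} {i : ι} {j : κ} (h : (i, j) ∉ l) :
    0 ≤ chainMatrix a l i j := by
  refine chainCost_nonneg (fun _ _ => by positivity) (fun q hq => if_neg ?_) a
  rintro ⟨rfl, rfl⟩
  exact h hq

end ChainMatrix

section DiscreteTransport

variable {ι κ : Type*} [Fintype ι] [Fintype κ]

def discreteCouplings (a : ι → ℝ) (b : κ → ℝ) : Set (ι → κ → ℝ) :=
  {π | (∀ i j, 0 ≤ π i j) ∧ (∀ i, ∑ j, π i j = a i) ∧ ∀ j, ∑ i, π i j = b j}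

def transportCost (C : ι → κ → ℝ) (π : ι → κ → ℝ) : ℝ :=
  ∑ i, ∑ j, π i j * C i j

variable {a : ι → ℝ} {b : κ → ℝ} {π : ι → κ → ℝ}

lemma transpose_mem_discreteCouplings (hπ : π ∈ discreteCouplings a b) :
    (fun j i => π i j) ∈ discreteCouplings b a :=
  ⟨fun j i => hπ.1 i j, hπ.2.2, hπ.2.1⟩

lemma eq_zero_of_mem_discreteCouplings_of_eq_zero (hπ : π ∈ discreteCouplings a b) {j : κ}
    (hb : b j = 0) (i : ι) : π i j = 0 :=
  (Finset.sum_eq_zero_iff_of_nonneg fun i _ => hπ.1 i j).1 (hπ.2.2 j ▸ hb) i (Finset.mem_univ i)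

lemma sum_sum_mul_sub_of_mem_discreteCouplings (hπ : π ∈ discreteCouplings a b)
    (u : ι → ℝ) (v : κ → ℝ) :
    ∑ i, ∑ j, π i j * (u i - v j) = ∑ i, a i * u i - ∑ j, b j * v j := by
  simp only [mul_sub, Finset.sum_sub_distrib, ← Finset.sum_mul, hπ.2.1]
  rw [Finset.sum_comm]
  simp only [← Finset.sum_mul, hπ.2.2]

lemma isCompact_discreteCouplings (a : ι → ℝ) (b : κ → ℝ) :
    IsCompact (discreteCouplings a b) := by
  refine (isCompact_univ_pi fun i => isCompact_univ_pi fun j => isCompact_Icc (a := 0) (b := a i))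
    |>.of_isClosed_subset ?_ fun π hπ i _ j _ => ⟨hπ.1 i j, ?_⟩
  · simp only [discreteCouplings, Set.ofPred_and, Set.ofPred_forall]
    refine .inter (isClosed_iInter fun i => isClosed_iInter fun j => isClosed_le (by fun_prop)
      (by fun_prop)) (.inter ?_ ?_) <;>
    exact isClosed_iInter fun _ => isClosed_eq (by fun_prop) (by fun_prop)
  · rw [← hπ.2.1 i]
    exact Finset.single_le_sum (fun j _ => hπ.1 i j) (Finset.mem_univ j)

lemma product_mem_discreteCouplings (ha₀ : ∀ i, 0 ≤ a i) (hb₀ : ∀ j, 0 ≤ b j)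
    (ha : ∑ i, a i = 1) (hb : ∑ j, b j = 1) :
    (fun i j => a i * b j) ∈ discreteCouplings a b :=
  ⟨fun i j => mul_nonneg (ha₀ i) (hb₀ j), fun i => by rw [← Finset.mul_sum, hb, mul_one],
    fun j => by rw [← Finset.sum_mul, ha, one_mul]⟩

lemma exists_isMinOn_transportCost (C : ι → κ → ℝ) (ha₀ : ∀ i, 0 ≤ a i) (hb₀ : ∀ j, 0 ≤ b j)
    (ha : ∑ i, a i = 1) (hb : ∑ j, b j = 1) :
    ∃ π ∈ discreteCouplings a b, IsMinOn (transportCost C) (discreteCouplings a b) π :=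
  (isCompact_discreteCouplings a b).exists_isMinOn
    ⟨_, product_mem_discreteCouplings ha₀ hb₀ ha hb⟩ (by unfold transportCost; fun_prop)

open Filter Topology in
lemma exists_pos_forall_nonneg_add_mul {π Δ : ι → κ → ℝ} (hπ : ∀ i j, 0 ≤ π i j)
    (hΔ : ∀ i j, Δ i j < 0 → 0 < π i j) : ∃ δ > 0, ∀ i j, 0 ≤ π i j + δ * Δ i j := by
  have : ∀ᶠ δ in 𝓝[>] 0, ∀ i j, 0 ≤ π i j + δ * Δ i j := by
    refine eventually_all.2 fun i => eventually_all.2 fun j => ?_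
    by_cases h : 0 ≤ Δ i j
    · exact eventually_mem_nhdsWithin.mono fun δ hδ =>
        add_nonneg (hπ i j) (mul_nonneg (le_of_lt hδ) h)
    · have : Tendsto (fun δ => π i j + δ * Δ i j) (𝓝 0) (𝓝 (π i j)) :=
        (continuous_const.add (continuous_id.mul continuous_const)).tendsto' _ _ (by simp)
      exact nhdsWithin_le_nhds <|
        (this.eventually_const_lt (hΔ i j (not_le.1 h))).mono fun _ h => h.le
  obtain ⟨δ, hδ, hδ_pos⟩ := (this.and self_mem_nhdsWithin).exists
  exact ⟨δ, hδ_pos, hδ⟩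

lemma transportCost_add_smul (C π Δ : ι → κ → ℝ) (δ : ℝ) :
    transportCost C (π + δ • Δ) = transportCost C π + δ * transportCost C Δ := by
  simp only [transportCost, Pi.add_apply, Pi.smul_apply, smul_eq_mul, add_mul,
    Finset.sum_add_distrib, Finset.mul_sum, mul_assoc]

lemma transportCost_chainMatrix [DecidableEq ι] [DecidableEq κ] (C : ι → κ → ℝ) (a : ι)
    (l : List (ι × κ)) :
    transportCost C (chainMatrix a l) = chainCost C a l := by
  simp only [transportCost, chainMatrix, ← chainCost_mul_const, ← chainCost_sum]
  congr 1; ext i' j'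
  simp [ite_and]

/-- Perturbing an optimal plan along a cycle of its support cannot decrease the cost. -/
theorem IsMinOn.isCyclicallyMonotone_transportCost (C : ι → κ → ℝ)
    (hπ : π ∈ discreteCouplings a b) (hmin : IsMinOn (transportCost C) (discreteCouplings a b) π) :
    IsCyclicallyMonotone C {p | 0 < π p.1 p.2} := by
  classical
  intro p hp l hl
  set Δ := chainMatrix p.1 (l ++ [p])
  have support (i : ι) (j : κ) (h : Δ i j < 0) : 0 < π i j := by
    by_contra h'
    refine h.not_ge (chainMatrix_nonneg fun hij => h' ?_)
    rcases List.mem_append.1 hij with hij | hij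
    · exact hl _ hij
    · obtain rfl := List.mem_singleton.1 hij
      exact hp
  obtain ⟨δ, hδ, hδ_nonneg⟩ := exists_pos_forall_nonneg_add_mul hπ.1 support
  have hmem : π + δ • Δ ∈ discreteCouplings a b :=
    ⟨hδ_nonneg,
      fun i => by simp [Finset.sum_add_distrib, ← Finset.mul_sum, Δ, sum_chainMatrix_row, hπ.2.1 i],
      fun j => by simp [Finset.sum_add_distrib, ← Finset.mul_sum, Δ, sum_chainMatrix_col, hπ.2.2 j]⟩
  have := isMinOn_iff.1 hmin _ hmem
  rw [transportCost_add_smul, transportCost_chainMatrix] at this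
  exact nonneg_of_mul_nonneg_right (by linarith) hδ

theorem exists_mem_discreteCouplings_transportCost_le {X : Type*} [PseudoMetricSpace X]
    (z : ι → X) (w : κ → X) (ha₀ : ∀ i, 0 ≤ a i) (hb₀ : ∀ j, 0 ≤ b j)
    (ha : ∑ i, a i = 1) (hb : ∑ j, b j = 1) :
    ∃ π ∈ discreteCouplings a b, ∃ f : X → ℝ, LipschitzWith 1 f ∧
      transportCost (fun i j => dist (z i) (w j)) π ≤ ∑ i, a i * f (z i) - ∑ j, b j * f (w j) := by
  obtain ⟨π, hπ, hmin⟩ := exists_isMinOn_transportCost (fun i j => dist (z i) (w j)) ha₀ hb₀ ha hb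
  obtain ⟨f, hf, hfS⟩ :=
    (hmin.isCyclicallyMonotone_transportCost _ hπ).image.exists_lipschitzWith
  refine ⟨π, hπ, f, hf, ?_⟩
  rw [← sum_sum_mul_sub_of_mem_discreteCouplings hπ]
  refine Finset.sum_le_sum fun i _ => Finset.sum_le_sum fun j _ => ?_
  rcases (hπ.1 i j).eq_or_lt with h | h
  · simp [← h]
  · have := hfS _ ⟨(i, j), h, rfl⟩
    exact mul_le_mul_of_nonneg_left (by simp only [Prod.map] at this; linarith) h.le

end DiscreteTransport

section Gluing

open ProbabilityTheory

variable {X Y ι κ : Type*} [MeasurableSpace X] [MeasurableSpace Y] [Fintype ι] [Fintype κ]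

noncomputable def glueCoupling (μ : Measure X) (ν : Measure Y) (p : X → ι) (q : Y → κ)
    (π : ι → κ → ℝ) : Measure (X × Y) :=
  ∑ i, ∑ j, ENNReal.ofReal (π i j) • (μ[|p ⁻¹' {i}]).prod (ν[|q ⁻¹' {j}])

variable {μ : Measure X} {ν : Measure Y} {p : X → ι} {q : Y → κ} {π : ι → κ → ℝ}

lemma map_fst_glueCoupling [IsFiniteMeasure μ] [IsFiniteMeasure ν] [MeasurableSpace ι]
    [DiscreteMeasurableSpace ι] (hp : Measurable p)
    (hπ : π ∈ discreteCouplings (fun i => μ.real (p ⁻¹' {i})) (fun j => ν.real (q ⁻¹' {j}))) :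
    (glueCoupling μ ν p q π).map Prod.fst = μ := by
  have mass_eq (i : ι) (j : κ) :
      ENNReal.ofReal (π i j) * ν[|q ⁻¹' {j}] Set.univ = ENNReal.ofReal (π i j) := by
    rcases eq_or_ne (ν (q ⁻¹' {j})) 0 with h | h
    · simp [eq_zero_of_mem_discreteCouplings_of_eq_zero hπ (j := j) (by simp [measureReal_def, h])]
    · have := cond_isProbabilityMeasure h
      rw [measure_univ, mul_one]
  calc _ = ∑ i, ∑ j, ENNReal.ofReal (π i j) • μ[|p ⁻¹' {i}] := by
        simp [glueCoupling, Measure.map_finset_sum' measurable_fst.aemeasurable, smul_smul, mass_eq]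
    _ = ∑ i, μ (p ⁻¹' {i}) • μ[|p ⁻¹' {i}] := by
        refine Finset.sum_congr rfl fun i _ => ?_
        rw [← Finset.sum_smul, ← ENNReal.ofReal_sum_of_nonneg fun j _ => hπ.1 i j, hπ.2.1 i,
          ofReal_measureReal]
    _ = μ := sum_meas_smul_cond_fiber hp μ

lemma map_swap_glueCoupling :
    (glueCoupling μ ν p q π).map Prod.swap = glueCoupling ν μ q p fun j i => π i j := by
  simp only [glueCoupling, Measure.map_finset_sum' measurable_swap.aemeasurable,
    Measure.map_smul, Measure.prod_swap]
  exact Finset.sum_comm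

lemma map_snd_glueCoupling [IsFiniteMeasure μ] [IsFiniteMeasure ν] [MeasurableSpace κ]
    [DiscreteMeasurableSpace κ] (hq : Measurable q)
    (hπ : π ∈ discreteCouplings (fun i => μ.real (p ⁻¹' {i})) (fun j => ν.real (q ⁻¹' {j}))) :
    (glueCoupling μ ν p q π).map Prod.snd = ν := by
  calc _ = ((glueCoupling μ ν p q π).map Prod.swap).map Prod.fst := by
        rw [Measure.map_map measurable_fst measurable_swap]; rfl
    _ = ν := by
        rw [map_swap_glueCoupling, map_fst_glueCoupling hq (transpose_mem_discreteCouplings hπ)]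

lemma lintegral_prod_cond_le {s : Set X} {t : Set Y} (hs : MeasurableSet s) (ht : MeasurableSet t)
    {g : X × Y → ℝ≥0∞} {C : ℝ≥0∞} (hg : ∀ x ∈ s, ∀ y ∈ t, g (x, y) ≤ C) :
    ∫⁻ z, g z ∂(μ[|s]).prod (ν[|t]) ≤ C := by
  have hst : ∀ᵐ z ∂(μ[|s]).prod (ν[|t]), z.1 ∈ s ∧ z.2 ∈ t :=
    (Measure.quasiMeasurePreserving_fst.ae (ae_cond_mem hs)).and
      (Measure.quasiMeasurePreserving_snd.ae (ae_cond_mem ht))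
  calc ∫⁻ z, g z ∂(μ[|s]).prod (ν[|t]) ≤ ∫⁻ _, C ∂(μ[|s]).prod (ν[|t]) :=
        lintegral_mono_ae (hst.mono fun z hz => hg _ hz.1 _ hz.2)
    _ = C * (μ[|s] Set.univ * ν[|t] Set.univ) := by
        rw [lintegral_const, ← Set.univ_prod_univ, Measure.prod_prod]
    _ ≤ C := mul_le_of_le_one_right' (mul_le_one' prob_le_one prob_le_one)

lemma sum_measureReal_fiber (μ : Measure X) [IsProbabilityMeasure μ] [MeasurableSpace ι]
    [MeasurableSingletonClass ι] (hp : Measurable p) : ∑ i, μ.real (p ⁻¹' {i}) = 1 := by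
  rw [sum_measureReal_preimage_singleton _ fun i _ => hp (measurableSet_singleton i)]
  simp

end Gluing

section Discretization

open ProbabilityTheory

variable {X : Type*} [PseudoMetricSpace X] [MeasurableSpace X]

lemma exists_measurable_cell [CompactSpace X] [OpensMeasurableSpace X] [Nonempty X] {ε : ℝ}
    (hε : 0 < ε) :
    ∃ (n : ℕ) (z : Fin n → X) (cell : X → Fin n),
      Measurable cell ∧ ∀ x, dist x (z (cell x)) ≤ ε := by
  let e := TopologicalSpace.denseSeq X
  obtain ⟨t, ht⟩ := isCompact_univ.elim_finite_subcover (fun k => Metric.ball (e k) ε)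
    (fun _ => Metric.isOpen_ball) fun x _ => Set.mem_iUnion.2 <|
      (Metric.denseRange_iff.1 (TopologicalSpace.denseRange_denseSeq X) x ε hε).imp
        fun k hk => Metric.mem_ball.2 hk
  set N := t.sup id
  refine ⟨N + 1, fun k => e k, fun x => ⟨SimpleFunc.nearestPtInd e N x,
    Nat.lt_succ_of_le (SimpleFunc.nearestPtInd_le e N x)⟩,
    measurable_to_countable' fun i => ?_, fun x => ?_⟩
  · convert SimpleFunc.measurableSet_fiber (SimpleFunc.nearestPtInd e N) i.val using 1
    ext x
    simp [Fin.ext_iff]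
  · obtain ⟨k, hk, hxk⟩ := Set.mem_iUnion₂.1 (ht (Set.mem_univ x))
    have := SimpleFunc.edist_nearestPt_le e x (Finset.le_sup (f := id) hk)
    rw [edist_dist, edist_dist, ENNReal.ofReal_le_ofReal_iff dist_nonneg] at this
    rw [dist_comm]
    exact this.trans ((dist_comm _ _).trans_le (Metric.mem_ball.1 hxk).le)

variable {ι : Type*} [Fintype ι] [MeasurableSpace ι] [DiscreteMeasurableSpace ι]
  {cell : X → ι} {z : ι → X} {ε : ℝ}

lemma abs_integral_sub_sum_measureReal_fiber_le {μ : Measure X} [IsProbabilityMeasure μ]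
    (hcell : Measurable cell) (hz : ∀ x, dist x (z (cell x)) ≤ ε) {f : X → ℝ}
    (hf : LipschitzWith 1 f) (hfi : Integrable f μ) :
    |∫ x, f x ∂μ - ∑ i, μ.real (cell ⁻¹' {i}) * f (z i)| ≤ ε := by
  have sum_eq : ∑ i, μ.real (cell ⁻¹' {i}) * f (z i) = ∫ x, f (z (cell x)) ∂μ := by
    rw [← integral_map (μ := μ) (f := fun i => f (z i)) hcell.aemeasurable
      Measurable.of_discrete.aestronglyMeasurable, integral_fintype Integrable.of_finite]
    simp [map_measureReal_apply hcell (measurableSet_singleton _)]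
  have hint : Integrable (fun x => f (z (cell x))) μ :=
    (Integrable.of_finite (μ := μ.map cell) (f := f ∘ z)).comp_measurable hcell
  have bound (x : X) : ‖f x - f (z (cell x))‖ ≤ ε := by
    rw [← dist_eq_norm]
    simpa using (hf.dist_le_mul x (z (cell x))).trans (by simpa using hz x)
  rw [sum_eq, ← integral_sub hfi hint, ← Real.norm_eq_abs]
  simpa using norm_integral_le_of_norm_le_const (μ := μ) (ae_of_all _ bound)

lemma lintegral_edist_glueCoupling_le {μ ν : Measure X} [IsProbabilityMeasure μ]
    (hcell : Measurable cell) (hz : ∀ x, dist x (z (cell x)) ≤ ε) {π : ι → ι → ℝ}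
    (hπ : π ∈ discreteCouplings (fun i => μ.real (cell ⁻¹' {i})) fun j => ν.real (cell ⁻¹' {j})) :
    ∫⁻ p, edist p.1 p.2 ∂glueCoupling μ ν cell cell π
      ≤ ENNReal.ofReal (transportCost (fun i j => dist (z i) (z j)) π + 2 * ε) := by
  have hε : 0 ≤ ε := by
    obtain ⟨x⟩ := nonempty_of_isProbabilityMeasure μ
    exact dist_nonneg.trans (hz x)
  have mass : ∑ i, ∑ j, π i j = 1 := by
    simp only [hπ.2.1]
    exact sum_measureReal_fiber μ hcell
  have cell_bound (i j : ι) : ∫⁻ p, edist p.1 p.2 ∂(μ[|cell ⁻¹' {i}]).prod (ν[|cell ⁻¹' {j}])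
      ≤ ENNReal.ofReal (dist (z i) (z j) + 2 * ε) := by
    refine lintegral_prod_cond_le (hcell (measurableSet_singleton i))
      (hcell (measurableSet_singleton j)) fun x hx y hy => ?_
    rw [edist_dist]
    refine ENNReal.ofReal_le_ofReal ?_
    have hx' := hz x
    have hy' := hz y
    rw [Set.mem_preimage, Set.mem_singleton_iff] at hx hy
    rw [hx] at hx'
    rw [hy] at hy'
    linarith [dist_triangle4 x (z i) (z j) y, dist_comm y (z j)]
  calc ∫⁻ p, edist p.1 p.2 ∂glueCoupling μ ν cell cell π
      = ∑ i, ∑ j, ENNReal.ofReal (π i j) *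
          ∫⁻ p, edist p.1 p.2 ∂(μ[|cell ⁻¹' {i}]).prod (ν[|cell ⁻¹' {j}]) := by
        simp [glueCoupling, lintegral_finsetSum_measure, lintegral_smul_measure]
    _ ≤ ∑ i, ∑ j, ENNReal.ofReal (π i j) * ENNReal.ofReal (dist (z i) (z j) + 2 * ε) := by
        gcongr with i _ j _
        exact cell_bound i j
    _ = ENNReal.ofReal (∑ i, ∑ j, π i j * (dist (z i) (z j) + 2 * ε)) := by
        rw [ENNReal.ofReal_sum_of_nonneg fun i _ => Finset.sum_nonneg fun j _ =>
          mul_nonneg (hπ.1 i j) (by positivity)]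
        refine Finset.sum_congr rfl fun i _ => ?_
        rw [ENNReal.ofReal_sum_of_nonneg fun j _ => mul_nonneg (hπ.1 i j) (by positivity)]
        exact Finset.sum_congr rfl fun j _ => (ENNReal.ofReal_mul (hπ.1 i j)).symm
    _ = ENNReal.ofReal (transportCost (fun i j => dist (z i) (z j)) π + 2 * ε) := by
        simp only [transportCost, mul_add, Finset.sum_add_distrib, ← Finset.sum_mul, mass, one_mul]

end Discretization

section Duality

variable {X : Type*} [PseudoMetricSpace X] [MeasurableSpace X] {μ ν : Measure X}

lemma wassersteinDist_le_lintegral_edist {γ : Measure (X × X)} (h₁ : γ.map Prod.fst = μ)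
    (h₂ : γ.map Prod.snd = ν) : wassersteinDist μ ν ≤ ∫⁻ p, edist p.1 p.2 ∂γ :=
  iInf₂_le γ ⟨h₁, h₂⟩

lemma ofReal_integral_sub_le_lintegral_edist {γ : Measure (X × X)} (h₁ : γ.map Prod.fst = μ)
    (h₂ : γ.map Prod.snd = ν) {f : X → ℝ} (hf : LipschitzWith 1 f) (hμ : Integrable f μ)
    (hν : Integrable f ν) :
    ENNReal.ofReal (∫ x, f x ∂μ - ∫ x, f x ∂ν) ≤ ∫⁻ p, edist p.1 p.2 ∂γ := by
  subst h₁ h₂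
  have h₁ : Integrable (fun p : X × X => f p.1) γ :=
    (integrable_map_measure hμ.aestronglyMeasurable measurable_fst.aemeasurable).1 hμ
  have h₂ : Integrable (fun p : X × X => f p.2) γ :=
    (integrable_map_measure hν.aestronglyMeasurable measurable_snd.aemeasurable).1 hν
  rw [integral_map measurable_fst.aemeasurable hμ.aestronglyMeasurable,
    integral_map measurable_snd.aemeasurable hν.aestronglyMeasurable, ← integral_sub h₁ h₂]
  calc ENNReal.ofReal (∫ p, f p.1 - f p.2 ∂γ) ≤ ‖∫ p, f p.1 - f p.2 ∂γ‖ₑ := by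
        rw [Real.enorm_eq_ofReal_abs]
        exact ENNReal.ofReal_le_ofReal (le_abs_self _)
    _ ≤ ∫⁻ p, ‖f p.1 - f p.2‖ₑ ∂γ := enorm_integral_le_lintegral_enorm _
    _ ≤ ∫⁻ p, edist p.1 p.2 ∂γ := lintegral_mono fun p => by
        simpa [← edist_eq_enorm_sub] using hf p.1 p.2

lemma ofReal_integral_sub_le_wassersteinDist {f : X → ℝ} (hf : LipschitzWith 1 f)
    (hμ : Integrable f μ) (hν : Integrable f ν) :
    ENNReal.ofReal (∫ x, f x ∂μ - ∫ x, f x ∂ν) ≤ wassersteinDist μ ν :=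
  le_iInf₂ fun _ hγ => ofReal_integral_sub_le_lintegral_edist hγ.1 hγ.2 hf hμ hν

lemma Continuous.integrable_of_compactSpace [CompactSpace X] [OpensMeasurableSpace X]
    {f : X → ℝ} (hf : Continuous f) (μ : Measure X) [IsFiniteMeasure μ] : Integrable f μ :=
  hf.integrable_of_hasCompactSupport (HasCompactSupport.of_compactSpace f)

theorem exists_lipschitzWith_wassersteinDist_le [CompactSpace X] [OpensMeasurableSpace X]
    (μ ν : Measure X) [IsProbabilityMeasure μ] [IsProbabilityMeasure ν] {ε : ℝ} (hε : 0 < ε) :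
    ∃ f : X → ℝ, LipschitzWith 1 f ∧
      wassersteinDist μ ν ≤ ENNReal.ofReal (∫ x, f x ∂μ - ∫ x, f x ∂ν + ε) := by
  have := nonempty_of_isProbabilityMeasure μ
  obtain ⟨n, z, cell, hcell, hz⟩ := exists_measurable_cell (X := X) (show 0 < ε / 4 by positivity)
  obtain ⟨π, hπ, f, hf, hcost⟩ := exists_mem_discreteCouplings_transportCost_le z z
    (fun _ => measureReal_nonneg) (fun _ => measureReal_nonneg)
    (sum_measureReal_fiber μ hcell) (sum_measureReal_fiber ν hcell)
  have hμ := abs_le.1 <| abs_integral_sub_sum_measureReal_fiber_le hcell hz hf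
    (hf.continuous.integrable_of_compactSpace μ)
  have hν := abs_le.1 <| abs_integral_sub_sum_measureReal_fiber_le hcell hz hf
    (hf.continuous.integrable_of_compactSpace ν)
  refine ⟨f, hf, ?_⟩
  calc wassersteinDist μ ν ≤ ∫⁻ p, edist p.1 p.2 ∂glueCoupling μ ν cell cell π :=
        wassersteinDist_le_lintegral_edist (map_fst_glueCoupling hcell hπ)
          (map_snd_glueCoupling hcell hπ)
    _ ≤ ENNReal.ofReal (transportCost (fun i j => dist (z i) (z j)) π + 2 * (ε / 4)) :=
        lintegral_edist_glueCoupling_le hcell hz hπ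
    _ ≤ ENNReal.ofReal (∫ x, f x ∂μ - ∫ x, f x ∂ν + ε) :=
        ENNReal.ofReal_le_ofReal (by linarith)

end Duality

lemma ENNReal.toReal_eq_ciSup_of_forall_le_ofReal_add {ι : Type*} {W : ℝ≥0∞} {F : ι → ℝ}
    (hF₀ : ∃ i, 0 ≤ F i) (hle : ∀ i, ENNReal.ofReal (F i) ≤ W)
    (hge : ∀ ε > 0, ∃ i, W ≤ ENNReal.ofReal (F i + ε)) :
    W.toReal = ⨆ i, F i := by
  obtain ⟨i₀, hi₀⟩ := hF₀
  have : Nonempty ι := ⟨i₀⟩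
  have hW : W ≠ ⊤ := by
    obtain ⟨i, hi⟩ := hge 1 one_pos
    exact ne_top_of_le_ne_top ENNReal.ofReal_ne_top hi
  refine (IsLUB.ciSup_eq ⟨?_, fun u hu => ?_⟩).symm
  · rintro _ ⟨i, rfl⟩
    exact (ENNReal.ofReal_le_iff_le_toReal hW).1 (hle i)
  refine _root_.le_of_forall_pos_le_add fun ε hε => ?_
  obtain ⟨i, hi⟩ := hge ε hε
  calc W.toReal ≤ (ENNReal.ofReal (F i + ε)).toReal := ENNReal.toReal_mono ENNReal.ofReal_ne_top hi
    _ ≤ u + ε := by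
        rw [ENNReal.toReal_ofReal']
        exact max_le (by linarith [hu ⟨i, rfl⟩]) (by linarith [hu ⟨i₀, rfl⟩])

/-- Kantorovich–Rubinstein duality on a compact metric space. -/
theorem kantorovich_rubinstein
    {X : Type*} [MetricSpace X] [MeasurableSpace X] [BorelSpace X] [CompactSpace X]
    (μ ν : Measure X) [IsProbabilityMeasure μ] [IsProbabilityMeasure ν] :
    (wassersteinDist μ ν).toReal
      = ⨆ f : {f : X → ℝ // LipschitzWith 1 f},
          (∫ x, f.1 x ∂μ - ∫ x, f.1 x ∂ν) := by
  refine ENNReal.toReal_eq_ciSup_of_forall_le_ofReal_add ⟨⟨0, LipschitzWith.const' 0⟩, by simp⟩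
    (fun f => ofReal_integral_sub_le_wassersteinDist f.2
      (f.2.continuous.integrable_of_compactSpace μ) (f.2.continuous.integrable_of_compactSpace ν))
    fun ε hε => ?_
  obtain ⟨f, hf, hWf⟩ := exists_lipschitzWith_wassersteinDist_le μ ν hε
  exact ⟨⟨f, hf⟩, hWf⟩
end
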